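/- arXiv:2304.15003 — 3 statements merged into one kernel-verified Lean document; each statement's English description precedes it below -/
import Mathlib

section
/- For every integer ℓ ≥ 2 and r ≥ 4, and every function p : ℕ → (0,1] satisfying p(n)·n^r → ∞ and p(n)·n^{(r−1)−1/(2ℓ−1)} → 0 as n → ∞, the following holds asymptotically almost surely: for every ε > 0, the probability that (1−ε)·p(n)·C(n,r) ≤ ex(G_{n,p(n)}^{(r)}, C_{2ℓ}^{(r)}) ≤ (1+ε)·p(n)·C(n,r) tends to 1 as n → ∞ (here C(n,r) is the binomial coefficient). -/
open MeasureTheory Filter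

/-- `E` is the edge set of a linear cycle `C_k^{(r)}`: `k` distinct edges `e_0, …, e_{k-1}`,
each of size `r`, cyclically consecutive edges sharing exactly one vertex, non-consecutive
edges disjoint. -/
def IsLinearCycle {α : Type*} [DecidableEq α] (r k : ℕ) (E : Finset (Finset α)) : Prop :=
  ∃ e : ℕ → Finset α,
    (∀ i < k, ∀ j < k, e i = e j → i = j) ∧
    E = (Finset.range k).image e ∧
    (∀ i < k, (e i).card = r) ∧
    (∀ i < k, (e i ∩ e ((i + 1) % k)).card = 1) ∧
    (∀ i < k, ∀ j < k, i ≠ j → (i + 1) % k ≠ j → (j + 1) % k ≠ i → Disjoint (e i) (e j))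

/-- `G` contains a (not necessarily induced) copy of the linear cycle `C_k^{(r)}`. -/
def ContainsLinearCycle {α : Type*} [DecidableEq α] (r k : ℕ) (G : Finset (Finset α)) : Prop :=
  ∃ E ⊆ G, IsLinearCycle r k E

open Classical in
/-- The maximum number of edges of a `C_k^{(r)}`-free subgraph of `G`. -/
noncomputable def exCycle {α : Type*} [DecidableEq α] (r k : ℕ) (G : Finset (Finset α)) : ℕ :=
  (G.powerset.filter fun H => ¬ ContainsLinearCycle r k H).sup Finset.card

/-- The Bernoulli measure on `Bool` with parameter `p`. -/
noncomputable def bernoulliMeasure (p : ℝ) : Measure Bool :=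
  ENNReal.ofReal p • Measure.dirac true + ENNReal.ofReal (1 - p) • Measure.dirac false

instance (p : ℝ) : IsFiniteMeasure (bernoulliMeasure p) := by
  constructor
  simp [bernoulliMeasure]

/-- The Erdős–Rényi random `r`-graph `G_{n,p}^{(r)}`, as the product Bernoulli measure
on indicator functions of the `r`-element subsets of `Fin n`. -/
noncomputable def randomHypergraph (n r : ℕ) (p : ℝ) :
    Measure ({s : Finset (Fin n) // s.card = r} → Bool) :=
  Measure.pi fun _ => bernoulliMeasure p

/-- The `r`-graph (set of `r`-element edges) determined by a sample point `ω`. -/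
def hypergraphOf {n r : ℕ} (ω : {s : Finset (Fin n) // s.card = r} → Bool) :
    Finset (Finset (Fin n)) :=
  (Finset.univ.filter fun e => ω e = true).image Subtype.val

/-!
Every `r`-graph `G` satisfies `#G - Z(G) ≤ ex(G, C_k) ≤ #G`, where `Z(G)` counts the cyclic
sequences of edges underlying linear `k`-cycles of `G`: deleting one edge from each linear cycle
leaves a `C_k`-free graph. In `G_{n,p}` the number of edges concentrates around `p·C(n,r)` by
Chebyshev, its variance being at most its mean. Such a sequence is determined by the vertex shared
by each consecutive pair of edges and the `r - 2` other vertices of each edge, so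
`E Z ≤ (n^(r-1) p)^k`. For `k = 2ℓ` the decay hypothesis on `p` says exactly that this is
`o(p n^r)`, so by Markov `Z` is negligible a.a.s.
-/

open Finset Topology Asymptotics
open scoped ProbabilityTheory

section BernoulliProduct

variable {I : Type*} [Fintype I] {q : ℝ}

lemma bernoulliMeasure_singleton_true (q : ℝ) : bernoulliMeasure q {true} = ENNReal.ofReal q := by
  simp [bernoulliMeasure]

lemma isProbabilityMeasure_bernoulliMeasure (h0 : 0 ≤ q) (h1 : q ≤ 1) :
    IsProbabilityMeasure (bernoulliMeasure q) := by
  constructor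
  rw [bernoulliMeasure, Measure.add_apply, Measure.smul_apply, Measure.smul_apply]
  simp [← ENNReal.ofReal_add h0 (sub_nonneg.2 h1)]

lemma measure_pi_bernoulli_forall_eq_true (h0 : 0 ≤ q) (h1 : q ≤ 1) (S : Finset I) :
    Measure.pi (fun _ : I => bernoulliMeasure q) {ω | ∀ i ∈ S, ω i = true}
      = ENNReal.ofReal q ^ #S := by
  classical
  have := isProbabilityMeasure_bernoulliMeasure h0 h1
  have hS : {ω : I → Bool | ∀ i ∈ S, ω i = true}
      = Set.univ.pi fun i => if i ∈ S then {true} else Set.univ := by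
    ext ω
    simp only [Set.mem_pi, Set.mem_univ, true_implies]
    refine forall_congr' fun i => ?_
    split_ifs <;> simp [*]
  simp only [hS, Measure.pi_pi, apply_ite, measure_univ, bernoulliMeasure_singleton_true]
  rw [prod_ite_mem, univ_inter, prod_const]

lemma integral_bernoulliMeasure_boole (h0 : 0 ≤ q) :
    ∫ b, (if b then (1 : ℝ) else 0) ∂bernoulliMeasure q = q := by
  rw [integral_fintype Integrable.of_finite]
  simp [measureReal_def, bernoulliMeasure_singleton_true, h0]

lemma measureReal_pi_bernoulli_card_deviation_ge_le (h0 : 0 ≤ q) (h1 : q ≤ 1) {t : ℝ}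
    (ht : 0 < t) :
    (Measure.pi fun _ : I => bernoulliMeasure q).real
        {ω | t ≤ |(#{i | ω i = true} : ℝ) - Fintype.card I * q|}
      ≤ Fintype.card I * q / t ^ 2 := by
  have := isProbabilityMeasure_bernoulliMeasure h0 h1
  set μ := Measure.pi fun _ : I => bernoulliMeasure q
  set x : Bool → ℝ := fun b => if b then 1 else 0
  set X : (I → Bool) → ℝ := ∑ i, fun ω => x (ω i)
  have hX : ∀ ω : I → Bool, (#{i | ω i = true} : ℝ) = X ω := by
    intro ω
    rw [natCast_card_filter]
    simp [X, x]
  have hmean : μ[X] = Fintype.card I * q := by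
    simp only [X, Finset.sum_apply]
    rw [integral_finsetSum _ fun i _ => Integrable.of_finite]
    have hi : ∀ i, ∫ ω, x (ω i) ∂μ = q := fun i =>
      (integral_comp_eval (μ := fun _ : I => bernoulliMeasure q) .of_discrete).trans
        (integral_bernoulliMeasure_boole h0)
    simp [hi]
  have hvar : Var[X; μ] ≤ Fintype.card I * q := by
    have hx : x ^ 2 = x := by
      funext b
      cases b <;> simp [x]
    have hvar_x : Var[x; bernoulliMeasure q] ≤ q := by
      refine (ProbabilityTheory.variance_le_expectation_sq .of_discrete).trans_eq ?_
      rw [hx]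
      exact integral_bernoulliMeasure_boole h0
    rw [ProbabilityTheory.variance_sum_pi fun _ => MemLp.of_discrete]
    simp only [sum_const, card_univ, nsmul_eq_mul]
    gcongr
  have hcheb := ProbabilityTheory.meas_ge_le_variance_div_sq (μ := μ) (X := X)
    MemLp.of_discrete ht
  rw [hmean] at hcheb
  simp only [hX]
  refine (ENNReal.toReal_le_of_le_ofReal ?_ hcheb).trans ?_
  · exact div_nonneg (ProbabilityTheory.variance_nonneg _ _) (sq_nonneg t)
  · gcongr

end BernoulliProduct

section LinearCycles

variable {α : Type*} [DecidableEq α] {r k : ℕ}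

open Classical in
lemma exCycle_le_card (G : Finset (Finset α)) : exCycle r k G ≤ #G :=
  Finset.sup_le fun _ hH => card_le_card (mem_powerset.1 (mem_filter.1 hH).1)

lemma IsLinearCycle.nonempty (hk : 0 < k) {E : Finset (Finset α)} (h : IsLinearCycle r k E) :
    E.Nonempty := by
  obtain ⟨e, -, rfl, -⟩ := h
  exact ⟨e 0, mem_image_of_mem e (mem_range.2 hk)⟩

open Classical in
lemma card_le_exCycle_add_card_linearCycles (hk : 0 < k) (G : Finset (Finset α)) :
    #G ≤ exCycle r k G + #{E ∈ G.powerset | IsLinearCycle r k E} := by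
  set C := {E ∈ G.powerset | IsLinearCycle r k E}
  choose! pick hpick using fun E (hE : E ∈ C) => ((mem_filter.1 hE).2.nonempty hk)
  have hfree : ¬ ContainsLinearCycle r k (G \ C.image pick) := by
    rintro ⟨E, hEH, hE⟩
    have hEC : E ∈ C := mem_filter.2 ⟨mem_powerset.2 (hEH.trans sdiff_subset), hE⟩
    exact (mem_sdiff.1 (hEH (hpick E hEC))).2 (mem_image_of_mem pick hEC)
  calc #G ≤ #(G \ C.image pick) + #(C.image pick) := card_le_card_sdiff_add_card
    _ ≤ exCycle r k G + #C := by
      gcongr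
      · exact le_sup (mem_filter.2 ⟨mem_powerset.2 sdiff_subset, hfree⟩)
      · exact card_image_le

/-- The properties of the edge sequence of a linear cycle that suffice to count linear cycles. -/
def IsCyclicChain [NeZero k] (r : ℕ) (f : Fin k → Finset α) : Prop :=
  Function.Injective f ∧
    ∀ i, #(f i) = r ∧ #(f i ∩ f (i + 1)) = 1 ∧ Disjoint (f i) (f (i + 1 + 1))

lemma IsLinearCycle.exists_isCyclicChain [NeZero k] (hk : 4 ≤ k) {E : Finset (Finset α)}
    (h : IsLinearCycle r k E) :
    ∃ f : Fin k → Finset α, IsCyclicChain r f ∧ E = univ.image f := by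
  obtain ⟨e, hinj, rfl, hcard, hinter, hdisj⟩ := h
  have h1 : ((1 : Fin k) : ℕ) = 1 := by rw [Fin.coe_ofNat_eq_mod, Nat.mod_eq_of_lt (by omega)]
  have hsucc : ∀ i : Fin k, (i.val + 1) % k = (i + 1 : Fin k).val := by simp [Fin.val_add]
  have hne : (1 : Fin k) ≠ 0 ∧ (1 + 1 : Fin k) ≠ 0 ∧ (1 + (1 + 1) : Fin k) ≠ 0 := by
    simp only [ne_eq, Fin.ext_iff, Fin.val_add, h1, Fin.val_zero]
    refine ⟨by omega, ?_, ?_⟩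
    · rw [Nat.mod_eq_of_lt (by omega)]
      omega
    · rw [Nat.mod_eq_of_lt (show 1 + 1 < k by omega), Nat.mod_eq_of_lt (by omega)]
      omega
  refine ⟨fun i => e i, ⟨fun i j hij => Fin.ext (hinj i i.2 j j.2 hij), fun i =>
    ⟨hcard i i.2, by simpa [hsucc] using hinter i i.2, ?_⟩⟩, ?_⟩
  refine hdisj i i.2 (i + 1 + 1 : Fin k) (i + 1 + 1).2 ?_ ?_ ?_ <;>
    simp only [hsucc, ne_eq, ← Fin.ext_iff, add_assoc, left_eq_add, add_eq_left, add_right_inj]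
  · exact hne.2.1
  · exact hne.1
  · exact hne.2.2
  · ext x
    simp only [mem_image, mem_range, mem_univ, true_and]
    exact ⟨fun ⟨i, hi, hx⟩ => ⟨⟨i, hi⟩, hx⟩, fun ⟨i, hx⟩ => ⟨i, i.2, hx⟩⟩

lemma eq_inter_union_inter_union_sdiff (a s b : Finset α) :
    s = (a ∩ s) ∪ (s ∩ b) ∪ (s \ (a ∪ b)) := by
  ext x
  simp only [mem_union, mem_inter, Finset.mem_sdiff]
  tauto

variable [NeZero k]

def cyclicEncoding (f : Fin k → Finset α) (i : Fin k) : Finset α × Finset α :=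
  (f i ∩ f (i + 1), f i \ (f (i - 1) ∪ f (i + 1)))

lemma cyclicEncoding_injective : Function.Injective (cyclicEncoding (α := α) (k := k)) := by
  intro f g hfg
  funext i
  have hi := congrFun hfg i
  have hprev := congrFun hfg (i - 1)
  simp only [cyclicEncoding, sub_add_cancel, Prod.mk.injEq] at hi hprev
  rw [eq_inter_union_inter_union_sdiff (f (i - 1)) (f i) (f (i + 1)),
    eq_inter_union_inter_union_sdiff (g (i - 1)) (g i) (g (i + 1)), hprev.1, hi.1, hi.2]

lemma IsCyclicChain.card_sdiff_neighbours {f : Fin k → Finset α} (hf : IsCyclicChain r f)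
    (i : Fin k) : #(f i \ (f (i - 1) ∪ f (i + 1))) = r - 2 := by
  have hprev := (hf.2 (i - 1)).2
  rw [sub_add_cancel] at hprev
  rw [card_sdiff, union_inter_distrib_right,
    card_union_of_disjoint (hprev.2.mono inter_subset_left inter_subset_left),
    (hf.2 i).1, hprev.1, inter_comm, (hf.2 i).2.1]

open Classical in
lemma card_isCyclicChain_le [Fintype α] (hr : 2 ≤ r) :
    #{f : Fin k → Finset α | IsCyclicChain r f} ≤ (Fintype.card α ^ (r - 1)) ^ k := by
  set B := (univ : Finset α).powersetCard 1 ×ˢ (univ : Finset α).powersetCard (r - 2)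
  have hB : #B ≤ Fintype.card α ^ (r - 1) := by
    rw [card_product, card_powersetCard, card_powersetCard, card_univ, Nat.choose_one_right,
      show r - 1 = r - 2 + 1 by omega, pow_succ']
    exact Nat.mul_le_mul_left _ (Nat.choose_le_pow _ _)
  calc #{f : Fin k → Finset α | IsCyclicChain r f}
      ≤ #(Fintype.piFinset fun _ : Fin k => B) := by
        refine card_le_card_of_injOn cyclicEncoding (fun f hf => ?_) cyclicEncoding_injective.injOn
        have hf := (mem_filter.1 hf).2
        simp only [cyclicEncoding, Fintype.coe_piFinset, Set.mem_pi, Set.mem_univ, mem_coe,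
          mem_product, mem_powersetCard, subset_univ, true_and, forall_const, B]
        exact fun i => ⟨(hf.2 i).2.1, hf.card_sdiff_neighbours i⟩
    _ = #B ^ k := by simp
    _ ≤ (Fintype.card α ^ (r - 1)) ^ k := Nat.pow_le_pow_left hB k

open Classical in
lemma card_le_exCycle_add_card_cyclicChains [Fintype α] (hk : 4 ≤ k) (G : Finset (Finset α)) :
    #G ≤ exCycle r k G + #{f : Fin k → Finset α | IsCyclicChain r f ∧ ∀ i, f i ∈ G} := by
  refine (card_le_exCycle_add_card_linearCycles (by omega) G).trans (Nat.add_le_add_left ?_ _)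
  calc #{E ∈ G.powerset | IsLinearCycle r k E}
      ≤ #(({f : Fin k → Finset α | IsCyclicChain r f ∧ ∀ i, f i ∈ G} : Finset _).image
          (univ.image ·)) := by
        refine card_le_card fun E hE => ?_
        obtain ⟨hEG, hE⟩ := mem_filter.1 hE
        obtain ⟨f, hf, rfl⟩ := hE.exists_isCyclicChain hk
        exact mem_image_of_mem _ (mem_filter.2 ⟨mem_univ f, hf, fun i =>
          mem_powerset.1 hEG (mem_image_of_mem f (mem_univ i))⟩)
    _ ≤ _ := card_image_le

open Classical in
lemma exCycle_near_of_card_near [Fintype α] (hk : 4 ≤ k) {G : Finset (Finset α)} {m t : ℝ}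
    (hcard : |(#G : ℝ) - m| < t)
    (hchains : (#{f : Fin k → Finset α | IsCyclicChain r f ∧ ∀ i, f i ∈ G} : ℝ) < t) :
    m - 2 * t ≤ exCycle r k G ∧ (exCycle r k G : ℝ) ≤ m + t := by
  have hle : (exCycle r k G : ℝ) ≤ #G := mod_cast exCycle_le_card G
  have hge : (#G : ℝ)
      ≤ exCycle r k G + #{f : Fin k → Finset α | IsCyclicChain r f ∧ ∀ i, f i ∈ G} :=
    mod_cast card_le_exCycle_add_card_cyclicChains hk G
  rw [abs_lt] at hcard
  constructor <;> linarith

end LinearCycles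

section RandomHypergraph

variable {n r : ℕ} {q : ℝ}

lemma mem_hypergraphOf {ω : {s : Finset (Fin n) // s.card = r} → Bool} {e : Finset (Fin n)} :
    e ∈ hypergraphOf ω ↔ ∃ h : #e = r, ω ⟨e, h⟩ = true := by
  simp [hypergraphOf]

lemma card_hypergraphOf (ω : {s : Finset (Fin n) // s.card = r} → Bool) :
    #(hypergraphOf ω) = #{e | ω e = true} :=
  card_image_of_injective _ Subtype.val_injective

lemma isProbabilityMeasure_randomHypergraph (h0 : 0 ≤ q) (h1 : q ≤ 1) :
    IsProbabilityMeasure (randomHypergraph n r q) := by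
  have := isProbabilityMeasure_bernoulliMeasure h0 h1
  unfold randomHypergraph
  infer_instance

lemma randomHypergraph_setOf_subset_hypergraphOf (h0 : 0 ≤ q) (h1 : q ≤ 1)
    {T : Finset (Finset (Fin n))} (hT : ∀ e ∈ T, #e = r) :
    randomHypergraph n r q {ω | T ⊆ hypergraphOf ω} = ENNReal.ofReal q ^ #T := by
  have hset : {ω | T ⊆ hypergraphOf ω} = {ω | ∀ s ∈ T.subtype (#· = r), ω s = true} := by
    ext ω
    simp only [mem_subtype, Subtype.forall, subset_iff, mem_hypergraphOf]
    exact ⟨fun h e _ he => (h he).2, fun h e he => ⟨hT e he, h e (hT e he) he⟩⟩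
  rw [hset, randomHypergraph, measure_pi_bernoulli_forall_eq_true h0 h1, card_subtype,
    filter_true_of_mem hT]

variable {k : ℕ} [NeZero k]

lemma IsCyclicChain.randomHypergraph_real_forall_mem (h0 : 0 ≤ q) (h1 : q ≤ 1)
    {f : Fin k → Finset (Fin n)} (hf : IsCyclicChain r f) :
    (randomHypergraph n r q).real {ω | ∀ i, f i ∈ hypergraphOf ω} = q ^ k := by
  have hset : {ω : {s : Finset (Fin n) // s.card = r} → Bool | ∀ i, f i ∈ hypergraphOf ω}
      = {ω | univ.image f ⊆ hypergraphOf ω} := by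
    simp [image_subset_iff]
  rw [measureReal_def, hset, randomHypergraph_setOf_subset_hypergraphOf h0 h1, ENNReal.toReal_pow,
    ENNReal.toReal_ofReal h0, card_image_of_injective _ hf.1, card_univ, Fintype.card_fin]
  simpa using fun i => (hf.2 i).1

open Classical in
lemma integral_card_cyclicChains_le (h0 : 0 ≤ q) (h1 : q ≤ 1) (hr : 2 ≤ r) :
    ∫ ω, (#{f : Fin k → Finset (Fin n) |
        IsCyclicChain r f ∧ ∀ i, f i ∈ hypergraphOf ω} : ℝ) ∂randomHypergraph n r q
      ≤ ((n : ℝ) ^ (r - 1)) ^ k * q ^ k := by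
  have := isProbabilityMeasure_randomHypergraph (n := n) (r := r) h0 h1
  set C : Finset (Fin k → Finset (Fin n)) := {f | IsCyclicChain r f}
  have hcount : ∀ ω : {s : Finset (Fin n) // s.card = r} → Bool,
      (#{f : Fin k → Finset (Fin n) | IsCyclicChain r f ∧ ∀ i, f i ∈ hypergraphOf ω} : ℝ)
        = ∑ f ∈ C, {ω | ∀ i, f i ∈ hypergraphOf ω}.indicator 1 ω := by
    intro ω
    rw [natCast_card_filter, sum_filter]
    refine sum_congr rfl fun f _ => ?_
    by_cases hf : IsCyclicChain r f <;> simp [hf, Set.indicator]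
  have hC : (#C : ℝ) ≤ ((n : ℝ) ^ (r - 1)) ^ k := by
    exact_mod_cast (by simpa using card_isCyclicChain_le (α := Fin n) (k := k) hr :
      #C ≤ (n ^ (r - 1)) ^ k)
  simp only [hcount]
  rw [integral_finsetSum _ fun _ _ => Integrable.of_finite]
  simp only [integral_indicator_one MeasurableSet.of_discrete]
  rw [sum_congr rfl fun f hf => (mem_filter.1 hf).2.randomHypergraph_real_forall_mem h0 h1,
    sum_const, nsmul_eq_mul]
  gcongr

open Classical in
lemma randomHypergraph_real_card_cyclicChains_ge_le (h0 : 0 ≤ q) (h1 : q ≤ 1) (hr : 2 ≤ r)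
    {t : ℝ} (ht : 0 < t) :
    (randomHypergraph n r q).real {ω | t ≤ #{f : Fin k → Finset (Fin n) |
        IsCyclicChain r f ∧ ∀ i, f i ∈ hypergraphOf ω}}
      ≤ ((n : ℝ) ^ (r - 1)) ^ k * q ^ k / t := by
  have := isProbabilityMeasure_randomHypergraph (n := n) (r := r) h0 h1
  rw [le_div_iff₀ ht, mul_comm]
  exact (mul_meas_ge_le_integral_of_nonneg (.of_forall fun _ => Nat.cast_nonneg _)
    Integrable.of_finite t).trans (integral_card_cyclicChains_le h0 h1 hr)

end RandomHypergraph

lemma one_sub_le_randomHypergraph_real_exCycle_near_mean {n r k : ℕ} {q ε : ℝ} (hk : 4 ≤ k)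
    (hr : 2 ≤ r) (h0 : 0 < q) (h1 : q ≤ 1) (hε : 0 < ε) (hN : 0 < n.choose r) :
    1 - (4 / ε ^ 2 * (q * n.choose r)⁻¹
        + 2 / ε * (((n : ℝ) ^ (r - 1)) ^ k * q ^ k * (q * n.choose r)⁻¹))
      ≤ (randomHypergraph n r q).real
          {ω | (1 - ε) * q * (n.choose r : ℝ) ≤ (exCycle r k (hypergraphOf ω) : ℝ) ∧
            (exCycle r k (hypergraphOf ω) : ℝ) ≤ (1 + ε) * q * (n.choose r : ℝ)} := by
  classical
  have : NeZero k := ⟨by omega⟩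
  have := isProbabilityMeasure_randomHypergraph (n := n) (r := r) h0.le h1
  set μ := randomHypergraph n r q
  set N : ℝ := (n.choose r : ℝ)
  have hN' : 0 < N := Nat.cast_pos.2 hN
  have hcardI : (Fintype.card {s : Finset (Fin n) // s.card = r} : ℝ) = N := by
    simp [N, Fintype.card_finset_len]
  set t := ε / 2 * (q * N) with ht_def
  have ht : 0 < t := by positivity
  set bad₁ := {ω : {s : Finset (Fin n) // s.card = r} → Bool |
    t ≤ |(#{e | ω e = true} : ℝ) - Fintype.card {s : Finset (Fin n) // s.card = r} * q|}
  set bad₂ := {ω : {s : Finset (Fin n) // s.card = r} → Bool |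
    t ≤ #{f : Fin k → Finset (Fin n) | IsCyclicChain r f ∧ ∀ i, f i ∈ hypergraphOf ω}}
  have hb₁ : μ.real bad₁ ≤ 4 / ε ^ 2 * (q * N)⁻¹ := by
    refine (measureReal_pi_bernoulli_card_deviation_ge_le h0.le h1 ht).trans_eq ?_
    rw [hcardI, ht_def]
    field_simp
    ring
  have hb₂ : μ.real bad₂ ≤ 2 / ε * (((n : ℝ) ^ (r - 1)) ^ k * q ^ k * (q * N)⁻¹) := by
    refine (randomHypergraph_real_card_cyclicChains_ge_le h0.le h1 hr ht).trans_eq ?_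
    rw [ht_def]
    field_simp
  have hsub : {ω | (1 - ε) * q * N ≤ (exCycle r k (hypergraphOf ω) : ℝ) ∧
      (exCycle r k (hypergraphOf ω) : ℝ) ≤ (1 + ε) * q * N}ᶜ ⊆ bad₁ ∪ bad₂ := by
    intro ω hω
    by_contra h
    simp only [Set.mem_union, bad₁, bad₂, Set.mem_ofPred_eq, not_or, not_le, hcardI,
      ← card_hypergraphOf] at h
    obtain ⟨hlow, hup⟩ := exCycle_near_of_card_near hk h.1 h.2
    exact hω ⟨by linarith, by linarith⟩
  calc _ ≤ 1 - (μ.real bad₁ + μ.real bad₂) := by gcongr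
    _ ≤ 1 - μ.real (bad₁ ∪ bad₂) := by gcongr; exact measureReal_union_le _ _
    _ ≤ 1 - μ.real {ω | (1 - ε) * q * N ≤ (exCycle r k (hypergraphOf ω) : ℝ) ∧
          (exCycle r k (hypergraphOf ω) : ℝ) ≤ (1 + ε) * q * N}ᶜ := by
      gcongr; exact measure_ne_top μ _
    _ = _ := by rw [probReal_compl_eq_one_sub .of_discrete, sub_sub_cancel]

section Asymptotics

variable {p : ℕ → ℝ} {r : ℕ}

lemma isBigO_inv_mul_choose (hp : ∀ n, p n ≠ 0) :
    (fun n : ℕ => (p n * n.choose r)⁻¹) =O[atTop]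
      fun n : ℕ => (p n * (n : ℝ) ^ r)⁻¹ := by
  refine ((isBigO_refl p atTop).mul (isTheta_choose r).isBigO_symm).inv_rev ?_
  filter_upwards [eventually_gt_atTop 0] with n hn h
  exact absurd h (mul_ne_zero (hp n) (pow_ne_zero r (Nat.cast_ne_zero.2 hn.ne')))

lemma tendsto_inv_mul_choose (hp : ∀ n, p n ≠ 0)
    (hgrow : Tendsto (fun n : ℕ => p n * (n : ℝ) ^ r) atTop atTop) :
    Tendsto (fun n : ℕ => (p n * n.choose r)⁻¹) atTop (𝓝 0) :=
  (isBigO_inv_mul_choose hp).trans_tendsto hgrow.inv_tendsto_atTop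

lemma tendsto_pow_mul_inv_mul_choose {k : ℕ} (hk : 2 ≤ k) (hr : 1 ≤ r) (hp : ∀ n, p n ≠ 0)
    (hdecay : Tendsto (fun n : ℕ => p n * (n : ℝ) ^ ((r : ℝ) - 1 - 1 / ((k : ℝ) - 1)))
      atTop (𝓝 0)) :
    Tendsto (fun n : ℕ => ((n : ℝ) ^ (r - 1)) ^ k * p n ^ k * (p n * n.choose r)⁻¹)
      atTop (𝓝 0) := by
  refine ((isBigO_refl _ _).mul (isBigO_inv_mul_choose hp)).trans_tendsto ?_
  have hpow := hdecay.pow (k - 1)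
  rw [zero_pow (by omega)] at hpow
  refine hpow.congr' ?_
  filter_upwards [eventually_gt_atTop 0] with n hn
  have hx : (0 : ℝ) < n := Nat.cast_pos.2 hn
  set ρ : ℝ := (r : ℝ) - 1 - 1 / ((k : ℝ) - 1)
  have hexp : ((n : ℝ) ^ ρ) ^ (k - 1) * (n : ℝ) ^ r = ((n : ℝ) ^ (r - 1)) ^ k := by
    rw [← Real.rpow_natCast _ (k - 1), ← Real.rpow_mul hx.le, ← Real.rpow_natCast (n : ℝ) r,
      ← Real.rpow_add hx, ← pow_mul, ← Real.rpow_natCast]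
    congr 1
    have hk1 : (k : ℝ) - 1 ≠ 0 := by
      have : (2 : ℝ) ≤ k := by exact_mod_cast hk
      linarith
    push_cast [ρ, Nat.cast_sub hr, Nat.cast_sub (by omega : 1 ≤ k)]
    field_simp
    ring
  have hpk : p n ^ k = p n ^ (k - 1) * p n := by rw [← pow_succ, Nat.sub_add_cancel (by omega)]
  rw [← hexp, hpk]
  field_simp [hp n]
  ring

end Asymptotics

theorem statement0 (l r : ℕ) (hl : 2 ≤ l) (hr : 4 ≤ r)
    (p : ℕ → ℝ) (hp : ∀ n, 0 < p n ∧ p n ≤ 1)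
    (hgrow : Tendsto (fun n : ℕ => p n * (n : ℝ) ^ r) atTop atTop)
    (hdecay : Tendsto
      (fun n : ℕ => p n * (n : ℝ) ^ ((r : ℝ) - 1 - 1 / (2 * (l : ℝ) - 1)))
      atTop (nhds 0))
    (ε : ℝ) (hε : 0 < ε) :
    Tendsto
      (fun n : ℕ => randomHypergraph n r (p n)
        {ω | (1 - ε) * p n * (n.choose r : ℝ) ≤ (exCycle r (2 * l) (hypergraphOf ω) : ℝ) ∧
             (exCycle r (2 * l) (hypergraphOf ω) : ℝ) ≤ (1 + ε) * p n * (n.choose r : ℝ)})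
      atTop (nhds 1) := by
  have hp0 : ∀ n, p n ≠ 0 := fun n => (hp n).1.ne'
  have hμ : ∀ n, IsProbabilityMeasure (randomHypergraph n r (p n)) := fun n =>
    isProbabilityMeasure_randomHypergraph (hp n).1.le (hp n).2
  have herr : Tendsto (fun n : ℕ => 4 / ε ^ 2 * (p n * n.choose r)⁻¹
      + 2 / ε * (((n : ℝ) ^ (r - 1)) ^ (2 * l) * p n ^ (2 * l) * (p n * n.choose r)⁻¹))
      atTop (𝓝 0) := by
    have hcycles := tendsto_pow_mul_inv_mul_choose (r := r) (k := 2 * l) (by omega) (by omega)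
      hp0 (by push_cast; exact hdecay)
    have := ((tendsto_inv_mul_choose hp0 hgrow).const_mul (4 / ε ^ 2)).add
      (hcycles.const_mul (2 / ε))
    rwa [mul_zero, mul_zero, add_zero] at this
  have hlower := herr.const_sub 1
  rw [sub_zero] at hlower
  rw [← ENNReal.ofReal_one]
  refine (ENNReal.tendsto_ofReal (tendsto_of_tendsto_of_tendsto_of_le_of_le'
    hlower tendsto_const_nhds ?_ ?_)).congr
    fun n => ofReal_measureReal (measure_ne_top _ _)
  · filter_upwards [eventually_ge_atTop r] with n hn
    exact one_sub_le_randomHypergraph_real_exCycle_near_mean (k := 2 * l) (by omega) (by omega)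
      (hp n).1 (hp n).2 hε (Nat.choose_pos hn)
  · exact .of_forall fun n => measureReal_le_one
end

section
/- For every integer r ≥ 4 there exist a constant c > 0 and n_0 ∈ ℕ such that the following holds for all n ≥ n_0 and all reals K ≥ 1. Set R = C(r,2) and α_r = r!/(2·r^{R+r}). Let H' be an r-partite r-graph on at most n vertices with parts U_1, …, U_r satisfying |U_1| ≥ |U_2| ≥ … ≥ |U_r|, with no isolated vertices, with e(H') ≥ α_r·K·n^{r−1}/(log n)^R, and suppose that for every pair 1 ≤ i < j ≤ r there is a real Δ_{ij} ≥ 1 such that every pair (v_i, v_j) ∈ U_i × U_j that is contained in some edge of H' satisfies Δ_{ij}/(2R·(r·log n)^R) ≤ d_{H'}(v_i, v_j) ≤ 2·Δ_{ij}. Then there exists j ∈ {2, …, r} such that |∂_{U_1,U_j}(H')| ≥ K^{1/(r−1)}·|U_1|^{2−1/(r−1)}/(log n)^c. -/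
open MeasureTheory Filter

/-- `H` is an `r`-partite `r`-graph with parts `U 0, …, U (r-1)`: the parts are pairwise
disjoint and every edge has exactly one vertex in each part. -/
def IsPartiteWith {α : Type*} [DecidableEq α] (r : ℕ) (U : ℕ → Finset α)
    (H : Finset (Finset α)) : Prop :=
  (∀ i < r, ∀ j < r, i ≠ j → Disjoint (U i) (U j)) ∧
  ∀ e ∈ H, e.card = r ∧ (∀ i < r, (e ∩ U i).card = 1)

/-- The codegree of the pair `u, v`: the number of edges of `H` containing both. -/
def codeg {α : Type*} [DecidableEq α] (H : Finset (Finset α)) (u v : α) : ℕ :=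
  (H.filter fun e => u ∈ e ∧ v ∈ e).card

/-- The shadow `∂_{U,W}(H)`: pairs `(u, v) ∈ U × W` contained together in some edge of `H`. -/
def shadowPairs {α : Type*} [DecidableEq α] (H : Finset (Finset α)) (U W : Finset α) :
    Finset (α × α) :=
  (U ×ˢ W).filter fun x => ∃ e ∈ H, x.1 ∈ e ∧ x.2 ∈ e

/-! Let `u` be a vertex of minimum degree `D` in `U₀`, so that `|U₀| D ≤ e(H)`. The edges
through `u` inject into the product of its neighbourhoods `N_j ⊆ U_j`, and summing the codegrees
`d(u, v) ≥ Δ_{0j}/λ`, `λ = 2R (r log n)^R`, over `v ∈ N_j` gives `Δ_{0j} |N_j| ≤ λ D`; for `j`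
minimising `Δ_{0j}` this yields `Δ_{0j}^{r-1} ≤ λ^{r-1} D^{r-2}`. Double counting the edges over
the shadow `∂_{U₀,U_j}`, whose codegrees are at most `2Δ_{0j}`, gives
`e(H) ≤ 2Δ_{0j} |∂_{U₀,U_j}|`. Eliminating `D` and `Δ_{0j}` leaves
`e(H) |U₀|^{r-2} ≤ (2λ |∂_{U₀,U_j}|)^{r-1}`, and the lower bound on `e(H)` turns this into the
claim once `log n` dominates the constants. -/

open Finset

lemma mul_pow_le_of_link_bound {s : ℕ} (hs : 1 ≤ s) {A D E S m μ : ℝ} (hA : 0 ≤ A) (hD : 0 < D)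
    (hS : 0 ≤ S) (hμ : 0 < μ) (hlink : (m / μ) ^ s * D ≤ D ^ s)
    (hAD : A * D ≤ E) (hE : E ≤ S * m) : E * A ^ (s - 1) ≤ (μ * S) ^ s := by
  obtain ⟨t, rfl⟩ : ∃ t, s = t + 1 := ⟨s - 1, by omega⟩
  rw [add_tsub_cancel_right]
  obtain hE₀ | hE₀ := ((mul_nonneg hA hD.le).trans hAD).eq_or_lt
  · rw [← hE₀, zero_mul]
    positivity
  have hmD : m ^ (t + 1) * D ≤ μ ^ (t + 1) * D ^ (t + 1) := by
    calc m ^ (t + 1) * D = μ ^ (t + 1) * ((m / μ) ^ (t + 1) * D) := by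
          rw [div_pow]; field_simp
      _ ≤ μ ^ (t + 1) * D ^ (t + 1) := by gcongr
  have key : E ^ t * D * (E * A ^ t) ≤ E ^ t * D * (μ * S) ^ (t + 1) :=
    calc E ^ t * D * (E * A ^ t) = E ^ (t + 1) * A ^ t * D := by ring
      _ ≤ (S * m) ^ (t + 1) * A ^ t * D := by gcongr
      _ = S ^ (t + 1) * A ^ t * (m ^ (t + 1) * D) := by ring
      _ ≤ S ^ (t + 1) * A ^ t * (μ ^ (t + 1) * D ^ (t + 1)) := by gcongr
      _ = D * (A * D) ^ t * (μ * S) ^ (t + 1) := by ring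
      _ ≤ D * E ^ t * (μ * S) ^ (t + 1) := by gcongr
      _ = E ^ t * D * (μ * S) ^ (t + 1) := by ring
  exact le_of_mul_le_mul_left key (by positivity)

lemma mul_pow_le_of_card_bounds {s R : ℕ} (hs : 1 ≤ s) {a b K A N L E S : ℝ} (ha : 0 < a)
    (ha₁ : a ≤ 1) (hb : 0 ≤ b) (hbL : b ≤ a * L) (hL : 1 ≤ L) (hK : 0 ≤ K) (hA : 0 ≤ A)
    (hAN : A ≤ N) (hS : 0 ≤ S) (hE : a * K * N ^ s / L ^ R ≤ E)
    (hEA : E * A ^ (s - 1) ≤ (b * L ^ R * S) ^ s) :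
    K * A ^ (2 * s - 1) ≤ (S * L ^ (2 * R + 1)) ^ s := by
  obtain ⟨t, rfl⟩ : ∃ t, s = t + 1 := ⟨s - 1, by omega⟩
  rw [add_tsub_cancel_right] at hEA
  rw [show 2 * (t + 1) - 1 = (t + 1) + t by omega]
  have hE' : a * K * N ^ (t + 1) ≤ E * L ^ R := (div_le_iff₀ (by positivity)).mp hE
  have hLpow : L ^ (R * (t + 1) + R) ≤ L ^ (2 * R * (t + 1)) :=
    pow_le_pow_right₀ hL (by nlinarith)
  have key : a * (K * A ^ ((t + 1) + t)) ≤ a * (S * L ^ (2 * R + 1)) ^ (t + 1) :=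
    calc a * (K * A ^ ((t + 1) + t)) = a * K * A ^ (t + 1) * A ^ t := by ring
      _ ≤ a * K * N ^ (t + 1) * A ^ t := by gcongr
      _ ≤ E * L ^ R * A ^ t := by gcongr
      _ = E * A ^ t * L ^ R := by ring
      _ ≤ (b * L ^ R * S) ^ (t + 1) * L ^ R := by gcongr
      _ = b ^ (t + 1) * S ^ (t + 1) * L ^ (R * (t + 1) + R) := by ring
      _ ≤ (a * L) ^ (t + 1) * S ^ (t + 1) * L ^ (2 * R * (t + 1)) := by gcongr
      _ = a ^ (t + 1) * (S * L ^ (2 * R + 1)) ^ (t + 1) := by ring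
      _ ≤ a * (S * L ^ (2 * R + 1)) ^ (t + 1) := by
          gcongr
          exact pow_le_of_le_one ha.le ha₁ t.succ_ne_zero
  exact le_of_mul_le_mul_left key ha

lemma factorial_div_two_mul_pow_le_one {n : ℕ} (hn : 0 < n) (k : ℕ) :
    (n.factorial : ℝ) / (2 * (n : ℝ) ^ (k + n)) ≤ 1 := by
  have hpow : (1 : ℝ) ≤ (n : ℝ) ^ k := one_le_pow₀ (by exact_mod_cast hn)
  rw [div_le_one (by positivity), pow_add]
  calc (n.factorial : ℝ) ≤ (n : ℝ) ^ n := by exact_mod_cast n.factorial_le_pow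
    _ ≤ 2 * ((n : ℝ) ^ k * (n : ℝ) ^ n) := by
        nlinarith [pow_pos (show (0 : ℝ) < n by exact_mod_cast hn) n]

lemma rpow_le_of_mul_pow_le {s : ℕ} (hs : 1 ≤ s) {K A T : ℝ} (hK : 0 ≤ K) (hA : 0 ≤ A)
    (hT : 0 ≤ T) (h : K * A ^ (2 * s - 1) ≤ T ^ s) :
    K ^ (1 / (s : ℝ)) * A ^ (2 - 1 / (s : ℝ)) ≤ T := by
  have hs₀ : (s : ℝ) ≠ 0 := by positivity
  calc K ^ (1 / (s : ℝ)) * A ^ (2 - 1 / (s : ℝ)) = (K * A ^ (2 * s - 1)) ^ (1 / (s : ℝ)) := by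
        rw [Real.mul_rpow hK (by positivity), ← Real.rpow_natCast, ← Real.rpow_mul hA]
        congr 2
        rw [Nat.cast_sub (by omega)]
        field_simp
        push_cast
        ring
    _ ≤ (T ^ s) ^ (1 / (s : ℝ)) := Real.rpow_le_rpow (by positivity) h (by positivity)
    _ = T := by rw [one_div, Real.pow_rpow_inv_natCast hT (by omega)]

variable {α : Type*} [DecidableEq α]

def vertexDegree (H : Finset (Finset α)) (u : α) : ℕ :=
  #(H.filter (u ∈ ·))

def neighborsIn (H : Finset (Finset α)) (u : α) (W : Finset α) : Finset α :=
  W.filter fun v => ∃ e ∈ H, u ∈ e ∧ v ∈ e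

lemma exists_mem_of_codeg_ne_zero {H : Finset (Finset α)} {u v : α} (h : codeg H u v ≠ 0) :
    ∃ e ∈ H, u ∈ e ∧ v ∈ e := by
  simpa [codeg, filter_eq_empty_iff] using h

lemma mk_mem_shadowPairs {H : Finset (Finset α)} {U W : Finset α} {u v : α} (hu : u ∈ U)
    (hv : v ∈ neighborsIn H u W) : (u, v) ∈ shadowPairs H U W := by
  rw [neighborsIn, mem_filter] at hv
  exact mem_filter.mpr ⟨mem_product.mpr ⟨hu, hv.1⟩, hv.2⟩

namespace IsPartiteWith

variable {r i j : ℕ} {U : ℕ → Finset α} {H : Finset (Finset α)} {e : Finset α} {u : α}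

lemma card_inter (hH : IsPartiteWith r U H) (he : e ∈ H) (hi : i < r) : #(e ∩ U i) = 1 :=
  (hH.2 e he).2 i hi

lemma inter_eq_singleton (hH : IsPartiteWith r U H) (he : e ∈ H) (hi : i < r) (hu : u ∈ e)
    (hui : u ∈ U i) : e ∩ U i = {u} := by
  obtain ⟨a, ha⟩ := card_eq_one.mp (hH.card_inter he hi)
  have hmem : u ∈ e ∩ U i := mem_inter.mpr ⟨hu, hui⟩
  rw [ha, mem_singleton] at hmem
  rw [ha, hmem]

lemma nonempty_part (hH : IsPartiteWith r U H) (hne : H.Nonempty) (hi : i < r) :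
    (U i).Nonempty := by
  obtain ⟨e, he⟩ := hne
  exact (card_pos.mp (by rw [hH.card_inter he hi]; exact one_pos)).mono inter_subset_right

lemma subset_biUnion (hH : IsPartiteWith r U H) (he : e ∈ H) : e ⊆ (range r).biUnion U := by
  have hdisj : ((range r : Finset ℕ) : Set ℕ).PairwiseDisjoint fun j => e ∩ U j :=
    fun j hj k hk hjk => (hH.1 j (mem_range.mp hj) k (mem_range.mp hk) hjk).mono
      inter_subset_right inter_subset_right
  have hcover : (range r).biUnion (fun j => e ∩ U j) = e := by
    refine eq_of_subset_of_card_le (biUnion_subset.mpr fun j _ => inter_subset_left) ?_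
    rw [card_biUnion hdisj, sum_congr rfl fun j hj => hH.card_inter he (mem_range.mp hj),
      (hH.2 e he).1]
    simp
  rw [← hcover]
  exact biUnion_mono fun j _ => inter_subset_right

lemma eq_of_inter_eq (hH : IsPartiteWith r U H) {e₁ e₂ : Finset α} (he₁ : e₁ ∈ H)
    (he₂ : e₂ ∈ H) (h : ∀ j < r, e₁ ∩ U j = e₂ ∩ U j) : e₁ = e₂ := by
  have key : ∀ {f₁ f₂ : Finset α}, f₁ ∈ H → (∀ j < r, f₁ ∩ U j = f₂ ∩ U j) → f₁ ⊆ f₂ := by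
    intro f₁ f₂ hf₁ hf x hx
    obtain ⟨j, hj, hxj⟩ := mem_biUnion.mp (hH.subset_biUnion hf₁ hx)
    have : x ∈ f₂ ∩ U j := hf j (mem_range.mp hj) ▸ mem_inter.mpr ⟨hx, hxj⟩
    exact mem_of_mem_inter_left this
  exact (key he₁ h).antisymm (key he₂ fun j hj => (h j hj).symm)

lemma sum_vertexDegree (hH : IsPartiteWith r U H) (hi : i < r) :
    ∑ u ∈ U i, vertexDegree H u = #H := by
  simp only [vertexDegree, card_filter]
  rw [sum_comm]
  refine (sum_congr rfl fun e he => ?_).trans (card_eq_sum_ones H).symm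
  rw [← card_filter, filter_mem_eq_inter, inter_comm, hH.card_inter he hi]

lemma sum_neighborsIn_codeg (hH : IsPartiteWith r U H) (hj : j < r) (u : α) :
    ∑ v ∈ neighborsIn H u (U j), codeg H u v = vertexDegree H u := by
  rw [neighborsIn, sum_filter_of_ne fun v _ h => exists_mem_of_codeg_ne_zero h]
  simp only [codeg, vertexDegree, card_filter]
  rw [sum_comm]
  refine sum_congr rfl fun e he => ?_
  by_cases hue : u ∈ e
  · simp only [hue, true_and, if_true]
    rw [← card_filter, filter_mem_eq_inter, inter_comm, hH.card_inter he hj]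
  · simp [hue]

lemma sum_shadowPairs_codeg (hH : IsPartiteWith r U H) (hi : i < r) (hj : j < r) :
    ∑ p ∈ shadowPairs H (U i) (U j), codeg H p.1 p.2 = #H := by
  rw [shadowPairs, sum_filter_of_ne fun p _ h => exists_mem_of_codeg_ne_zero h]
  simp only [codeg, card_filter]
  rw [sum_comm]
  refine (sum_congr rfl fun e he => ?_).trans (card_eq_sum_ones H).symm
  rw [← card_filter, filter_product (· ∈ e) (· ∈ e), card_product, filter_mem_eq_inter,
    filter_mem_eq_inter, inter_comm, hH.card_inter he hi, inter_comm, hH.card_inter he hj]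

lemma vertexDegree_le_prod_card_neighborsIn (hH : IsPartiteWith r U H) (hu : u ∈ U i) :
    vertexDegree H u ≤ ∏ j ∈ (range r).erase i, #(neighborsIn H u (U j)) := by
  let single : α ↪ Finset α := ⟨singleton, singleton_injective⟩
  calc vertexDegree H u
      ≤ #(((range r).erase i).pi fun j => (neighborsIn H u (U j)).map single) := by
        refine card_le_card_of_injOn (fun e j _ => e ∩ U j) ?maps ?inj
        case maps =>
          intro e he
          rw [mem_coe, mem_filter] at he
          rw [mem_coe, Finset.mem_pi]
          intro j hj
          obtain ⟨v, hv⟩ :=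
            card_eq_one.mp (hH.card_inter he.1 (mem_range.mp (mem_of_mem_erase hj)))
          have hvmem : v ∈ e ∩ U j := hv ▸ mem_singleton_self v
          exact Finset.mem_map.mpr ⟨v, mem_filter.mpr ⟨mem_of_mem_inter_right hvmem,
            e, he.1, he.2, mem_of_mem_inter_left hvmem⟩, hv.symm⟩
        case inj =>
          intro e₁ he₁ e₂ he₂ h
          rw [mem_coe, mem_filter] at he₁ he₂
          refine hH.eq_of_inter_eq he₁.1 he₂.1 fun j hj => ?_
          by_cases hji : j = i
          · subst hji
            rw [hH.inter_eq_singleton he₁.1 hj he₁.2 hu, hH.inter_eq_singleton he₂.1 hj he₂.2 hu]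
          · exact congr_fun₂ h j (mem_erase.mpr ⟨hji, mem_range.mpr hj⟩)
    _ = ∏ j ∈ (range r).erase i, #(neighborsIn H u (U j)) := by
        simp [card_pi]

lemma prod_mul_vertexDegree_le (hH : IsPartiteWith r U H) (hi : i < r) (hu : u ∈ U i)
    {δ : ℕ → ℝ} (hδ₀ : ∀ j ∈ (range r).erase i, 0 ≤ δ j)
    (hδ : ∀ j ∈ (range r).erase i, ∀ v ∈ neighborsIn H u (U j), δ j ≤ codeg H u v) :
    (∏ j ∈ (range r).erase i, δ j) * vertexDegree H u ≤ (vertexDegree H u : ℝ) ^ (r - 1) := by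
  have hcard : ∀ j ∈ (range r).erase i, δ j * #(neighborsIn H u (U j)) ≤ vertexDegree H u := by
    intro j hj
    have hsum := card_nsmul_le_sum _ (fun v => (codeg H u v : ℝ)) _ (hδ j hj)
    rw [nsmul_eq_mul, ← Nat.cast_sum,
      hH.sum_neighborsIn_codeg (mem_range.mp (mem_of_mem_erase hj))] at hsum
    linarith
  calc (∏ j ∈ (range r).erase i, δ j) * vertexDegree H u
      ≤ (∏ j ∈ (range r).erase i, δ j) * ∏ j ∈ (range r).erase i, #(neighborsIn H u (U j)) := by
        gcongr
        · exact prod_nonneg hδ₀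
        · exact_mod_cast hH.vertexDegree_le_prod_card_neighborsIn hu
    _ = ∏ j ∈ (range r).erase i, δ j * #(neighborsIn H u (U j)) := by
        rw [prod_mul_distrib]; push_cast; rfl
    _ ≤ ∏ _j ∈ (range r).erase i, (vertexDegree H u : ℝ) :=
        prod_le_prod (fun j hj => mul_nonneg (hδ₀ j hj) (Nat.cast_nonneg _)) hcard
    _ = (vertexDegree H u : ℝ) ^ (r - 1) := by
        rw [prod_const, card_erase_of_mem (mem_range.mpr hi), card_range]

theorem exists_card_mul_pow_le_card_shadowPairs (hH : IsPartiteWith r U H) (hr : 2 ≤ r)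
    (hi : i < r) (hne : H.Nonempty) (hiso : ∀ v ∈ U i, ∃ e ∈ H, v ∈ e) {Δ : ℕ → ℝ} {μ κ : ℝ}
    (hμ : 0 < μ) (hκ : 0 ≤ κ) (hΔ : ∀ j < r, j ≠ i → 0 ≤ Δ j)
    (hcodeg : ∀ j < r, j ≠ i → ∀ v ∈ U i, ∀ w ∈ U j, (∃ e ∈ H, v ∈ e ∧ w ∈ e) →
      Δ j / μ ≤ codeg H v w ∧ codeg H v w ≤ κ * Δ j) :
    ∃ j < r, j ≠ i ∧
      (#H : ℝ) * #(U i) ^ (r - 2) ≤ (κ * μ * #(shadowPairs H (U i) (U j))) ^ (r - 1) := by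
  have hothers : (∀ k ∈ (range r).erase i, k < r ∧ k ≠ i) := fun k hk =>
    ⟨mem_range.mp (mem_of_mem_erase hk), ne_of_mem_erase hk⟩
  have hpair : ∀ k ∈ (range r).erase i, ∀ p ∈ shadowPairs H (U i) (U k),
      Δ k / μ ≤ codeg H p.1 p.2 ∧ codeg H p.1 p.2 ≤ κ * Δ k := fun k hk p hp =>
    hcodeg k (hothers k hk).1 (hothers k hk).2 p.1 (mem_product.mp (mem_filter.mp hp).1).1 p.2
      (mem_product.mp (mem_filter.mp hp).1).2 (mem_filter.mp hp).2
  obtain ⟨u, hu, hmin⟩ := exists_min_image (U i) (vertexDegree H) (hH.nonempty_part hne hi)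
  obtain ⟨j, hj, hjmin⟩ := exists_min_image ((range r).erase i) Δ
    (card_pos.mp (by rw [card_erase_of_mem (mem_range.mpr hi), card_range]; omega))
  refine ⟨j, (hothers j hj).1, (hothers j hj).2, ?_⟩
  have hdeg : 0 < vertexDegree H u := by
    obtain ⟨e, he, hue⟩ := hiso u hu
    exact card_pos.mpr ⟨e, mem_filter.mpr ⟨he, hue⟩⟩
  have hAD : #(U i) * vertexDegree H u ≤ #H := by
    simpa [hH.sum_vertexDegree hi] using card_nsmul_le_sum (U i) _ _ hmin
  have hΔ' : ∀ k ∈ (range r).erase i, 0 ≤ Δ k / μ := fun k hk =>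
    div_nonneg (hΔ k (hothers k hk).1 (hothers k hk).2) hμ.le
  have hlink : (Δ j / μ) ^ (r - 1) * vertexDegree H u ≤ (vertexDegree H u : ℝ) ^ (r - 1) :=
    calc (Δ j / μ) ^ (r - 1) * vertexDegree H u
        ≤ (∏ k ∈ (range r).erase i, Δ k / μ) * vertexDegree H u := by
          rw [← card_range r, ← card_erase_of_mem (mem_range.mpr hi), ← prod_const, card_range]
          gcongr with k hk
          · exact fun _ _ => hΔ' j hj
          · exact hjmin k hk
      _ ≤ (vertexDegree H u : ℝ) ^ (r - 1) :=
          hH.prod_mul_vertexDegree_le hi hu hΔ'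
            fun k hk v hv => (hpair k hk (u, v) (mk_mem_shadowPairs hu hv)).1
  have hshadow : (#H : ℝ) ≤ #(shadowPairs H (U i) (U j)) * κ * Δ j := by
    have hsum := sum_le_card_nsmul (shadowPairs H (U i) (U j)) (fun p => (codeg H p.1 p.2 : ℝ))
      (κ * Δ j) fun p hp => (hpair j hj p hp).2
    rw [nsmul_eq_mul, ← Nat.cast_sum, ← mul_assoc,
      hH.sum_shadowPairs_codeg hi (hothers j hj).1] at hsum
    exact hsum
  rw [show r - 2 = r - 1 - 1 by omega, show κ * μ * #(shadowPairs H (U i) (U j)) =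
    μ * (#(shadowPairs H (U i) (U j)) * κ) by ring]
  exact mul_pow_le_of_link_bound (by omega) (Nat.cast_nonneg _) (by exact_mod_cast hdeg)
    (by positivity) hμ hlink (by exact_mod_cast hAD) hshadow

end IsPartiteWith

theorem statement10 (r : ℕ) (hr : 4 ≤ r) :
    ∃ (c : ℝ) (n₀ : ℕ), 0 < c ∧
      ∀ n : ℕ, n₀ ≤ n → ∀ K : ℝ, 1 ≤ K →
      ∀ (H' : Finset (Finset (Fin n))) (U : ℕ → Finset (Fin n)) (Δ : ℕ → ℕ → ℝ),
        IsPartiteWith r U H' →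
        (∀ i < r, ∀ j < r, i ≤ j → (U j).card ≤ (U i).card) →
        (∀ i < r, ∀ v ∈ U i, ∃ e ∈ H', v ∈ e) →
        (r.factorial : ℝ) / (2 * (r : ℝ) ^ (r.choose 2 + r)) * K * (n : ℝ) ^ (r - 1) /
            Real.log n ^ (r.choose 2) ≤ (H'.card : ℝ) →
        (∀ i < r, ∀ j < r, i < j → 1 ≤ Δ i j ∧
          ∀ vi ∈ U i, ∀ vj ∈ U j, (∃ e ∈ H', vi ∈ e ∧ vj ∈ e) →
            Δ i j / (2 * (r.choose 2 : ℝ) * ((r : ℝ) * Real.log n) ^ (r.choose 2)) ≤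
              (codeg H' vi vj : ℝ) ∧
            (codeg H' vi vj : ℝ) ≤ 2 * Δ i j) →
        ∃ j : ℕ, 1 ≤ j ∧ j < r ∧
          K ^ (1 / ((r : ℝ) - 1)) * ((U 0).card : ℝ) ^ (2 - 1 / ((r : ℝ) - 1)) /
              Real.log n ^ c ≤ ((shadowPairs H' (U 0) (U j)).card : ℝ) := by
  set R := r.choose 2
  set a : ℝ := (r.factorial : ℝ) / (2 * (r : ℝ) ^ (R + r))
  -- `b * (log n) ^ R` is the ratio `2 * (2 * R * (r * log n) ^ R)` of the two codegree bounds
  set b : ℝ := 4 * R * (r : ℝ) ^ R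
  have hR : 0 < R := Nat.choose_pos (by omega)
  have ha : 0 < a := by positivity
  refine ⟨(2 * R + 1 : ℕ), ⌈Real.exp (b / a + 1)⌉₊, by positivity, ?_⟩
  intro n hn K hK H' U Δ hH _ hiso hE hΔ
  set L := Real.log n
  have hexp : Real.exp (b / a + 1) ≤ n := (Nat.le_ceil _).trans (by exact_mod_cast hn)
  have hn₀ : (0 : ℝ) < n := (Real.exp_pos _).trans_le hexp
  have hL : b / a + 1 ≤ L := (Real.le_log_iff_exp_le hn₀).mpr hexp
  have hL₁ : 1 ≤ L := by linarith [div_nonneg (show 0 ≤ b by positivity) ha.le]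
  have hne : H'.Nonempty := card_pos.mp (Nat.cast_pos.mp (lt_of_lt_of_le (by positivity) hE))
  obtain ⟨j, hjr, hj₀, hbound⟩ := hH.exists_card_mul_pow_le_card_shadowPairs (by omega) (by omega)
    hne (hiso 0 (by omega)) (by positivity) zero_le_two
    (fun j hjr hj₀ => zero_le_one.trans (hΔ 0 (by omega) j hjr (by omega)).1)
    fun j hjr hj₀ => (hΔ 0 (by omega) j hjr (by omega)).2
  refine ⟨j, by omega, hjr, ?_⟩
  rw [show (r : ℝ) - 1 = ((r - 1 : ℕ) : ℝ) by rw [Nat.cast_sub (by omega), Nat.cast_one],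
    Real.rpow_natCast, div_le_iff₀ (by positivity)]
  refine rpow_le_of_mul_pow_le (by omega) (by positivity) (Nat.cast_nonneg _) (by positivity)
    (mul_pow_le_of_card_bounds (b := b) (by omega) ha
      (factorial_div_two_mul_pow_le_one (by omega) R) (by positivity)
      (by rw [← div_le_iff₀' ha]; linarith) hL₁ (by positivity) (Nat.cast_nonneg _) ?_
      (Nat.cast_nonneg _) hE ?_)
  · exact_mod_cast (card_le_univ (U 0)).trans_eq (Fintype.card_fin n)
  · rwa [show r - 1 - 1 = r - 2 by omega, show b * L ^ R = 2 * (2 * R * (r * L) ^ R) by ring]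
end

section
/- Let r ≥ 3 and ℓ ≥ 2 be integers, let n ∈ ℕ, and let H' be an r-partite r-graph on at most n vertices with parts U_1, …, U_r. Suppose D > 0 is a real with D ≥ 8·ℓ·r·n^{r−3} such that d_{H'}(x,y) ≥ D for every pair (x,y) ∈ ∂_{U_1,U_2}(H'). Then for every sequence of 2ℓ distinct vertices x_1, x_2, …, x_{2ℓ} with (x_i, x_{i+1}) ∈ ∂_{U_1,U_2}(H') for all i (indices taken cyclically modulo 2ℓ, and alternating between U_1 and U_2), there are at least (D/2)^{2ℓ} ways to choose edges f_1, …, f_{2ℓ} of H' with {x_i, x_{i+1}} ⊆ f_i for each i, such that the sets f_i ∖ {x_i, x_{i+1}} are pairwise disjoint and disjoint from {x_1, …, x_{2ℓ}}; in particular each such choice of f_1, …, f_{2ℓ} forms a copy of the linear cycle C_{2ℓ}^{(r)} in H'. -/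
open MeasureTheory Filter

/-- A choice of edges `f 0, …, f (2l-1)` of `H'` extending the cyclic vertex sequence
`x 0, x 1, …, x (2l-1)`: edge `f i` contains `x i` and `x (i+1)` (cyclically), the leftover
parts `f i \ {x i, x (i+1)}` are pairwise disjoint, and they avoid all the vertices
`x 0, …, x (2l-1)`. -/
def CycleExtension (n l : ℕ) (H' : Finset (Finset (Fin n))) (x : ℕ → Fin n)
    (f : Fin (2 * l) → Finset (Fin n)) : Prop :=
  (∀ i : Fin (2 * l), f i ∈ H' ∧ x i.val ∈ f i ∧ x ((i.val + 1) % (2 * l)) ∈ f i) ∧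
  (∀ i j : Fin (2 * l), i ≠ j →
    Disjoint (f i \ {x i.val, x ((i.val + 1) % (2 * l))})
             (f j \ {x j.val, x ((j.val + 1) % (2 * l))})) ∧
  (∀ i : Fin (2 * l),
    Disjoint (f i \ {x i.val, x ((i.val + 1) % (2 * l))}) ((Finset.range (2 * l)).image x))


/-!
Choose the edges `f 0, f 1, …` greedily. When `f i` is chosen, at most `2l + 2lr` vertices
are forbidden: the `x j` and the private parts of the edges already chosen. An `r`-set through
`x i`, `x (i+1)` and a third vertex is determined by its remaining `r - 3` vertices, so each
forbidden vertex spoils at most `n^(r-3)` of the at least `D` edges through `x i, x (i+1)`, and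
the bound on `D` leaves at least `D/2` choices at every step. Every such choice is a linear
cycle, since two of its edges can only meet in the vertices `x j` that both contain.
-/

open Finset

section DisjointChoices

variable {α β : Type*} [DecidableEq α]

def disjointChoices {N : ℕ} (A : Fin N → Finset β) (L : Fin N → β → Finset α)
    (X : Finset α) : Finset (Fin N → β) :=
  (Fintype.piFinset A).filter fun f =>
    (∀ i j, i ≠ j → Disjoint (L i (f i)) (L j (f j))) ∧ ∀ i, Disjoint (L i (f i)) X

lemma cons_mem_disjointChoices {N : ℕ} {A : Fin (N + 1) → Finset β}
    {L : Fin (N + 1) → β → Finset α} {X : Finset α} {b : β} {g : Fin N → β}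
    (hb : b ∈ A 0) (hbX : Disjoint (L 0 b) X)
    (hg : g ∈ disjointChoices (fun i => A i.succ) (fun i => L i.succ) (X ∪ L 0 b)) :
    (Fin.cons b g : Fin (N + 1) → β) ∈ disjointChoices A L X := by
  simp only [disjointChoices, mem_filter, Fintype.mem_piFinset, disjoint_union_right] at hg ⊢
  obtain ⟨hgA, hgL, hgX⟩ := hg
  refine ⟨Fin.cases hb hgA, ?_, Fin.cases hbX fun i => (hgX i).1⟩
  intro i j hij
  induction i using Fin.cases <;> induction j using Fin.cases
  · exact absurd rfl hij
  · exact (hgX _).2.symm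
  · exact (hgX _).2
  · exact hgL _ _ fun h => hij (congrArg Fin.succ h)

theorem pow_le_card_disjointChoices {N s K c : ℕ} (A : Fin N → Finset β)
    (L : Fin N → β → Finset α) (X : Finset α)
    (hL : ∀ i, ∀ b ∈ A i, (L i b).card ≤ s) (hK : X.card + N * s ≤ K)
    (hA : ∀ i (B : Finset α), B.card ≤ K → c ≤ ((A i).filter fun b => Disjoint (L i b) B).card) :
    c ^ N ≤ (disjointChoices A L X).card := by
  induction N generalizing X with
  | zero => simp [disjointChoices]
  | succ N ih =>
    set good := (A 0).filter fun b => Disjoint (L 0 b) X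
    have htail : ∀ b ∈ good,
        c ^ N ≤ (disjointChoices (fun i => A i.succ) (fun i => L i.succ) (X ∪ L 0 b)).card := by
      intro b hb
      refine ih _ _ _ (fun i => hL i.succ) ?_ (fun i => hA i.succ)
      have := card_union_le X (L 0 b)
      have := hL 0 b (mem_filter.1 hb).1
      rw [Nat.succ_mul] at hK
      omega
    calc c ^ (N + 1) = c * c ^ N := by ring
      _ ≤ ∑ b ∈ good, c ^ N := by
        rw [sum_const, smul_eq_mul]
        exact Nat.mul_le_mul_right _ (hA 0 X (by omega))
      _ ≤ ∑ b ∈ good,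
          (disjointChoices (fun i => A i.succ) (fun i => L i.succ) (X ∪ L 0 b)).card :=
        sum_le_sum htail
      _ = (good.sigma fun b =>
          disjointChoices (fun i => A i.succ) (fun i => L i.succ) (X ∪ L 0 b)).card :=
        (card_sigma _ _).symm
      _ ≤ (disjointChoices A L X).card := by
        refine card_le_card_of_injOn (fun p => Fin.cons p.1 p.2) (fun p hp => ?_) ?_
        · obtain ⟨hb, hg⟩ := mem_sigma.1 hp
          exact cons_mem_disjointChoices (mem_filter.1 hb).1 (mem_filter.1 hb).2 hg
        · rintro ⟨b, g⟩ - ⟨b', g'⟩ - h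
          obtain ⟨rfl, rfl⟩ := Fin.cons_inj.1 h
          rfl

end DisjointChoices

lemma codeg_comm {α : Type*} [DecidableEq α] (H : Finset (Finset α)) (a b : α) :
    codeg H a b = codeg H b a := by
  simp only [codeg, and_comm]

section Codegree

variable {α : Type*} [Fintype α] [DecidableEq α] {r : ℕ} {H : Finset (Finset α)}

lemma card_filter_superset_le_choose (hH : ∀ e ∈ H, e.card = r) (t : Finset α) :
    (H.filter fun e => t ⊆ e).card ≤ (Fintype.card α).choose (r - t.card) := by
  calc (H.filter fun e => t ⊆ e).card
      ≤ ((powersetCard (r - t.card) (univ : Finset α)).image (· ∪ t)).card := by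
        refine card_le_card fun e he => ?_
        obtain ⟨heH, hte⟩ := mem_filter.1 he
        refine mem_image.2 ⟨e \ t, ?_, sdiff_union_of_subset hte⟩
        rw [mem_powersetCard, card_sdiff_of_subset hte, hH e heH]
        exact ⟨subset_univ _, rfl⟩
    _ ≤ (powersetCard (r - t.card) (univ : Finset α)).card := card_image_le
    _ = (Fintype.card α).choose (r - t.card) := by rw [card_powersetCard, card_univ]

lemma codeg_le_card_filter_disjoint_add (hH : ∀ e ∈ H, e.card = r) {a b : α} (hab : a ≠ b)
    (B : Finset α) :
    codeg H a b ≤ ((H.filter fun e => a ∈ e ∧ b ∈ e).filter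
      fun e => Disjoint (e \ {a, b}) B).card + B.card * Fintype.card α ^ (r - 3) := by
  set C := H.filter fun e => a ∈ e ∧ b ∈ e
  have hbad : (C.filter fun e => ¬ Disjoint (e \ {a, b}) B).card
      ≤ B.card * Fintype.card α ^ (r - 3) := by
    calc (C.filter fun e => ¬ Disjoint (e \ {a, b}) B).card
        ≤ ((B \ {a, b}).biUnion fun v => H.filter fun e => {a, b, v} ⊆ e).card := by
          refine card_le_card fun e he => ?_
          simp only [C, mem_filter, not_disjoint_iff] at he
          obtain ⟨⟨heH, hae, hbe⟩, v, hv, hvB⟩ := he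
          obtain ⟨hve, hvab⟩ := mem_sdiff.1 hv
          simp only [mem_biUnion, mem_filter]
          exact ⟨v, mem_sdiff.2 ⟨hvB, hvab⟩, heH, by simp [insert_subset_iff, hae, hbe, hve]⟩
      _ ≤ ∑ v ∈ B \ {a, b}, (H.filter fun e => {a, b, v} ⊆ e).card := card_biUnion_le
      _ ≤ ∑ v ∈ B \ {a, b}, Fintype.card α ^ (r - 3) := by
          refine sum_le_sum fun v hv => ?_
          have hvab : v ∉ ({a, b} : Finset α) := (mem_sdiff.1 hv).2
          have h3 : ({a, b, v} : Finset α).card = 3 := by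
            simp only [mem_insert, mem_singleton, not_or] at hvab
            rw [card_insert_of_notMem (by simp [hab, Ne.symm hvab.1]),
              card_pair (Ne.symm hvab.2)]
          calc _ ≤ (Fintype.card α).choose (r - 3) := h3 ▸ card_filter_superset_le_choose hH _
            _ ≤ _ := Nat.choose_le_pow _ _
      _ ≤ B.card * Fintype.card α ^ (r - 3) := by
          rw [sum_const, smul_eq_mul]
          exact Nat.mul_le_mul_right _ (card_le_card sdiff_subset)
  have := card_filter_add_card_filter_not (s := C) fun e => Disjoint (e \ {a, b}) B
  change C.card ≤ _
  omega

lemma div_two_le_card_filter_disjoint (hH : ∀ e ∈ H, e.card = r) {a b : α} (hab : a ≠ b)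
    (B : Finset α) {D : ℝ} (hD : 2 * B.card * (Fintype.card α : ℝ) ^ (r - 3) ≤ D)
    (hcodeg : D ≤ codeg H a b) :
    D / 2 ≤ ((H.filter fun e => a ∈ e ∧ b ∈ e).filter fun e => Disjoint (e \ {a, b}) B).card := by
  have := codeg_le_card_filter_disjoint_add hH hab B
  have : (codeg H a b : ℝ) ≤ ((H.filter fun e => a ∈ e ∧ b ∈ e).filter
      fun e => Disjoint (e \ {a, b}) B).card + B.card * (Fintype.card α : ℝ) ^ (r - 3) := by
    exact_mod_cast this
  linarith

end Codegree

lemma add_one_mod_eq_or {i N : ℕ} (h : i < N) :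
    (i + 1) % N = i + 1 ∧ i + 1 < N ∨ (i + 1) % N = 0 ∧ i + 1 = N := by
  rcases (show i + 1 ≤ N from h).lt_or_eq with h' | h'
  · exact Or.inl ⟨Nat.mod_eq_of_lt h', h'⟩
  · exact Or.inr ⟨by rw [h', Nat.mod_self], h'⟩

lemma pow_le_ncard_cycleExtension {r l n : ℕ} (hr : 1 ≤ r) (hl : 1 ≤ l)
    {H' : Finset (Finset (Fin n))} (hunif : ∀ e ∈ H', e.card = r) {D : ℝ}
    (hD : 8 * (l : ℝ) * r * n ^ (r - 3) ≤ D) {x : ℕ → Fin n}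
    (hdist : ∀ i < 2 * l, ∀ j < 2 * l, x i = x j → i = j)
    (hcodeg : ∀ i < 2 * l, D ≤ codeg H' (x i) (x ((i + 1) % (2 * l)))) :
    (D / 2) ^ (2 * l) ≤ (Set.ncard {f | CycleExtension n l H' x f} : ℝ) := by
  set A : Fin (2 * l) → Finset (Finset (Fin n)) := fun i =>
    H'.filter fun e => x i ∈ e ∧ x ((i + 1) % (2 * l)) ∈ e
  set L : Fin (2 * l) → Finset (Fin n) → Finset (Fin n) := fun i e =>
    e \ {x i, x ((i + 1) % (2 * l))}
  set X := (range (2 * l)).image x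
  have hset : {f | CycleExtension n l H' x f} = ↑(disjointChoices A L X) := by
    ext f
    simp only [CycleExtension, disjointChoices, A, L, X, coe_filter,
      Fintype.mem_piFinset, mem_filter]
  have hgood : ∀ i (B : Finset (Fin n)), B.card ≤ 2 * l + 2 * l * r →
      ⌈D / 2⌉₊ ≤ ((A i).filter fun e => Disjoint (L i e) B).card := by
    intro i B hB
    have hab : x i ≠ x ((i + 1) % (2 * l)) := fun h => by
      have := hdist _ i.isLt _ (Nat.mod_lt _ (by omega)) h
      rcases add_one_mod_eq_or i.isLt with h' | h' <;> omega
    have hB : (B.card : ℝ) ≤ 4 * l * r := by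
      have : B.card ≤ 4 * l * r := by nlinarith
      exact_mod_cast this
    have hBD : 2 * B.card * (Fintype.card (Fin n) : ℝ) ^ (r - 3) ≤ D := by
      rw [Fintype.card_fin]
      linarith [mul_le_mul_of_nonneg_right hB (by positivity : (0 : ℝ) ≤ (n : ℝ) ^ (r - 3))]
    exact Nat.ceil_le.2 (div_two_le_card_filter_disjoint hunif hab B hBD (hcodeg i i.isLt))
  have hD0 : 0 ≤ D := le_trans (by positivity) hD
  have hcard : (D / 2) ^ (2 * l) ≤ ((⌈D / 2⌉₊ ^ (2 * l) : ℕ) : ℝ) := by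
    push_cast
    exact pow_le_pow_left₀ (by linarith) (Nat.le_ceil _) _
  have hX : X.card + 2 * l * r ≤ 2 * l + 2 * l * r := by
    have : X.card ≤ 2 * l := card_image_le.trans (card_range _).le
    omega
  rw [hset, Set.ncard_coe_finset]
  have hL : ∀ i, ∀ e ∈ A i, (L i e).card ≤ r := fun i e he =>
    (card_le_card sdiff_subset).trans (hunif e (mem_filter.1 he).1).le
  exact hcard.trans (by exact_mod_cast pow_le_card_disjointChoices A L X hL hX hgood)

lemma inter_eq_inter_of_disjoint_sdiff {α : Type*} [DecidableEq α] {s t c d X : Finset α}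
    (hcs : c ⊆ s) (hdt : d ⊆ t) (hcX : c ⊆ X) (hdX : d ⊆ X) (hst : Disjoint (s \ c) (t \ d))
    (hsX : Disjoint (s \ c) X) (htX : Disjoint (t \ d) X) : s ∩ t = c ∩ d := by
  ext v
  simp only [mem_inter]
  constructor
  · rintro ⟨hvs, hvt⟩
    by_contra h
    rw [not_and_or] at h
    rcases h with hvc | hvd
    · by_cases hvd : v ∈ d
      · exact disjoint_left.1 hsX (mem_sdiff.2 ⟨hvs, hvc⟩) (hdX hvd)
      · exact disjoint_left.1 hst (mem_sdiff.2 ⟨hvs, hvc⟩) (mem_sdiff.2 ⟨hvt, hvd⟩)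
    · by_cases hvc : v ∈ c
      · exact disjoint_left.1 htX (mem_sdiff.2 ⟨hvt, hvd⟩) (hcX hvc)
      · exact disjoint_left.1 hst (mem_sdiff.2 ⟨hvs, hvc⟩) (mem_sdiff.2 ⟨hvt, hvd⟩)
  · exact fun ⟨hvc, hvd⟩ => ⟨hcs hvc, hdt hvd⟩

lemma pair_inter_pair_succ {N : ℕ} (hN : 3 ≤ N) {i : ℕ} (hi : i < N) :
    ({i, (i + 1) % N} ∩ {(i + 1) % N, ((i + 1) % N + 1) % N} : Finset ℕ) = {(i + 1) % N} := by
  have h1 := add_one_mod_eq_or hi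
  have h2 := add_one_mod_eq_or (Nat.mod_lt (i + 1) (by omega : 0 < N))
  ext k
  simp only [mem_inter, mem_insert, mem_singleton]
  omega

lemma disjoint_pair_pair {N i j : ℕ} (hi : i < N) (hj : j < N) (hij : i ≠ j)
    (hij' : (i + 1) % N ≠ j) (hji : (j + 1) % N ≠ i) :
    Disjoint ({i, (i + 1) % N} : Finset ℕ) {j, (j + 1) % N} := by
  have h1 := add_one_mod_eq_or hi
  have h2 := add_one_mod_eq_or hj
  simp only [disjoint_insert_left, disjoint_insert_right, disjoint_singleton, mem_insert,
    mem_singleton]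
  omega

theorem isLinearCycle_image_of_disjoint_sdiff {α : Type*} [DecidableEq α] {r N : ℕ}
    (hr : 3 ≤ r) (hN : 3 ≤ N) {y : ℕ → α} (hy : ∀ i < N, ∀ j < N, y i = y j → i = j)
    {f : Fin N → Finset α} (hcard : ∀ i, (f i).card = r)
    (hmem : ∀ i : Fin N, y i ∈ f i ∧ y ((i + 1) % N) ∈ f i)
    (hdisj : ∀ i j : Fin N, i ≠ j →
      Disjoint (f i \ {y i, y ((i + 1) % N)}) (f j \ {y j, y ((j + 1) % N)}))
    (hX : ∀ i : Fin N, Disjoint (f i \ {y i, y ((i + 1) % N)}) ((range N).image y)) :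
    IsLinearCycle r N (univ.image f) := by
  set P : ℕ → Finset ℕ := fun i => {i, (i + 1) % N}
  set e : ℕ → Finset α := fun i => if h : i < N then f ⟨i, h⟩ else ∅
  have he : ∀ i (hi : i < N), e i = f ⟨i, hi⟩ := fun i hi => dif_pos hi
  have hsucc : ∀ {i}, (i + 1) % N < N := Nat.mod_lt _ (by omega)
  have hPN : ∀ i < N, P i ⊆ range N := fun i hi => by
    simp only [P, insert_subset_iff, singleton_subset_iff, mem_range]
    exact ⟨hi, hsucc⟩
  have hcore : ∀ i < N, (P i).image y ⊆ e i ∧ (P i).image y ⊆ (range N).image y := by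
    refine fun i hi => ⟨?_, image_subset_image (hPN i hi)⟩
    simp only [P, image_insert, image_singleton, he i hi, insert_subset_iff,
      singleton_subset_iff]
    exact hmem ⟨i, hi⟩
  have hinj : Set.InjOn y ↑(range N) := fun a ha b hb => hy a (mem_range.1 ha) b (mem_range.1 hb)
  have hinter : ∀ i < N, ∀ j < N, i ≠ j → e i ∩ e j = (P i ∩ P j).image y := by
    intro i hi j hj hij
    rw [image_inter_of_injOn _ _ (hinj.mono (by
      rw [← coe_union]; exact coe_subset.2 (union_subset (hPN i hi) (hPN j hj))))]
    refine inter_eq_inter_of_disjoint_sdiff (hcore i hi).1 (hcore j hj).1 (hcore i hi).2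
      (hcore j hj).2 ?_ ?_ ?_ <;>
      simp only [P, image_insert, image_singleton, he i hi, he j hj]
    · exact hdisj ⟨i, hi⟩ ⟨j, hj⟩ (Fin.ne_of_val_ne hij)
    · exact hX ⟨i, hi⟩
    · exact hX ⟨j, hj⟩
  have hne_succ : ∀ i < N, i ≠ (i + 1) % N := fun i hi => by
    rcases add_one_mod_eq_or hi with h | h <;> omega
  refine ⟨e, fun i hi j hj hij => ?_, ?_, fun i hi => ?_, fun i hi => ?_,
    fun i hi j hj hij hij' hji => ?_⟩
  · by_contra hne
    have hcap := hinter i hi j hj hne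
    rw [hij, inter_self] at hcap
    have : r ≤ 2 := calc
      r = (e j).card := by rw [he j hj, hcard]
      _ ≤ (P i ∩ P j).card := hcap ▸ card_image_le
      _ ≤ (P i).card := card_le_card inter_subset_left
      _ ≤ 2 := card_le_two
    omega
  · ext s
    simp only [mem_image, mem_univ, true_and, mem_range]
    constructor
    · rintro ⟨i, rfl⟩
      exact ⟨i, i.isLt, he i i.isLt⟩
    · rintro ⟨i, hi, rfl⟩
      exact ⟨⟨i, hi⟩, (he i hi).symm⟩
  · rw [he i hi, hcard]
  · rw [hinter i hi _ hsucc (hne_succ i hi), pair_inter_pair_succ hN hi, image_singleton,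
      card_singleton]
  · rw [disjoint_iff_inter_eq_empty, hinter i hi j hj hij,
      disjoint_iff_inter_eq_empty.1 (disjoint_pair_pair hi hj hij hij' hji), image_empty]

theorem statement16 (r l : ℕ) (hr : 3 ≤ r) (hl : 2 ≤ l) (n : ℕ)
    (H' : Finset (Finset (Fin n))) (U : ℕ → Finset (Fin n))
    (hpart : IsPartiteWith r U H')
    (D : ℝ) (hD : 8 * (l : ℝ) * (r : ℝ) * (n : ℝ) ^ (r - 3) ≤ D)
    (hcodeg : ∀ xy ∈ shadowPairs H' (U 0) (U 1), D ≤ (codeg H' xy.1 xy.2 : ℝ))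
    (x : ℕ → Fin n)
    (hdist : ∀ i < 2 * l, ∀ j < 2 * l, x i = x j → i = j)
    (hshadow : ∀ i < 2 * l,
      (i % 2 = 0 → (x i, x ((i + 1) % (2 * l))) ∈ shadowPairs H' (U 0) (U 1)) ∧
      (i % 2 = 1 → (x ((i + 1) % (2 * l)), x i) ∈ shadowPairs H' (U 0) (U 1))) :
    (D / 2) ^ (2 * l) ≤
      (Set.ncard {f : Fin (2 * l) → Finset (Fin n) | CycleExtension n l H' x f} : ℝ) ∧
    ∀ f : Fin (2 * l) → Finset (Fin n), CycleExtension n l H' x f →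
      IsLinearCycle r (2 * l) (Finset.image f Finset.univ) := by
  have hunif : ∀ e ∈ H', e.card = r := fun e he => (hpart.2 e he).1
  have hcodeg' : ∀ i < 2 * l, D ≤ codeg H' (x i) (x ((i + 1) % (2 * l))) := by
    intro i hi
    rcases Nat.mod_two_eq_zero_or_one i with h | h
    · exact hcodeg (x i, x ((i + 1) % (2 * l))) ((hshadow i hi).1 h)
    · rw [codeg_comm]
      exact hcodeg (x ((i + 1) % (2 * l)), x i) ((hshadow i hi).2 h)
  refine ⟨pow_le_ncard_cycleExtension (by omega) (by omega) hunif hD hdist hcodeg',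
    fun f hf => ?_⟩
  obtain ⟨hmem, hdisj, hX⟩ := hf
  exact isLinearCycle_image_of_disjoint_sdiff hr (by omega) hdist
    (fun i => hunif _ (hmem i).1) (fun i => (hmem i).2) hdisj hX
end
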